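/- Let p₀₀ ≥ p₀₁ ≥ p₁₀ ≥ p₁₁ ≥ 0 sum to 1. Among all 24 permutations of the four numbers into a 2×2 array, the arrangement placing p₀₀, p₁₁ in the first row and p₀₁, p₁₀ in the second row maximizes H(row sums) − H(column sums), where row sums are (p₀₀+p₁₁, p₀₁+p₁₀) and column sums are (p₀₀+p₀₁, p₁₀+p₁₁). -/
import Mathlib

open Finset

/-- The symmetric entropy summand `t ↦ negMulLog t + negMulLog (1 - t)`. -/
noncomputable def gE (t : ℝ) : ℝ := Real.negMulLog t + Real.negMulLog (1 - t)

lemma gE_symm (x : ℝ) : gE (1 - x) = gE x := by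
  simp [gE, sub_sub_cancel, add_comm]

lemma gE_concave : ConcaveOn ℝ (Set.Icc (0:ℝ) 1) gE := by
  apply ConcaveOn.add
  · exact Real.concaveOn_negMulLog.subset (fun x hx => hx.1) (convex_Icc 0 1)
  · refine ⟨convex_Icc 0 1, fun x hx y hy a b ha hb hab => ?_⟩
    have h := Real.concaveOn_negMulLog.2 (show (1:ℝ) - x ∈ Set.Ici (0:ℝ) by
      simpa using hx.2) (show (1:ℝ) - y ∈ Set.Ici (0:ℝ) by simpa using hy.2) ha hb hab
    have e : a • (1 - x) + b • (1 - y) = 1 - (a • x + b • y) := by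
      simp only [smul_eq_mul]; nlinarith
    rw [e] at h
    simpa using h

lemma gE_le {u v : ℝ} (h0 : 0 ≤ u) (h1 : u ≤ v) (h2 : v ≤ 1 - u) : gE u ≤ gE v := by
  have hu1 : u ≤ 1 := by linarith
  have hmem : v ∈ segment ℝ u (1 - u) := by
    rw [segment_eq_Icc (by linarith)]
    exact ⟨h1, h2⟩
  have := gE_concave.ge_on_segment ⟨h0, hu1⟩ ⟨by linarith, by linarith⟩ hmem
  rwa [gE_symm, min_self] at this

lemma sum4 (f : Fin 2 × Fin 2 → ℝ) :
    ∑ x, f x = f (0,0) + f (0,1) + f (1,0) + f (1,1) := by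
  rw [Fintype.sum_prod_type]
  simp [Fin.sum_univ_two]
  ring

/-- Entropy difference `H(row sums) − H(column sums)` of a 2×2 arrangement. -/
noncomputable def entDiff2 (q : Fin 2 × Fin 2 → ℝ) : ℝ :=
  (Real.negMulLog (q (0, 0) + q (0, 1)) + Real.negMulLog (q (1, 0) + q (1, 1))) -
    (Real.negMulLog (q (0, 0) + q (1, 0)) + Real.negMulLog (q (0, 1) + q (1, 1)))

/-- Among all arrangements of four ordered numbers `p₀₀ ≥ p₀₁ ≥ p₁₀ ≥ p₁₁` into a
2×2 array, the one placing `p₀₀, p₁₁` in the first row and `p₀₁, p₁₀` in the second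
maximizes `H(row sums) − H(column sums)`. -/
theorem stmt_6 (p : Fin 2 × Fin 2 → ℝ)
    (h1 : p (0, 1) ≤ p (0, 0)) (h2 : p (1, 0) ≤ p (0, 1)) (h3 : p (1, 1) ≤ p (1, 0))
    (h4 : 0 ≤ p (1, 1)) (hsum : ∑ x, p x = 1) :
    ∀ σ : Equiv.Perm (Fin 2 × Fin 2),
      entDiff2 (p ∘ σ) ≤
        entDiff2 (fun x =>
          if x = (0, 0) then p (0, 0) else if x = (0, 1) then p (1, 1)
          else if x = (1, 0) then p (0, 1) else p (1, 0)) := by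
  intro σ
  have hq : p (0,0) + p (0,1) + p (1,0) + p (1,1) = 1 := by rw [← sum4]; exact hsum
  -- Lemma A: any pair sum is between p(1,0)+p(1,1) and p(0,0)+p(0,1)
  have lemA : ∀ i j : Fin 2 × Fin 2, i ≠ j →
      p (1,0) + p (1,1) ≤ p i + p j ∧ p i + p j ≤ p (0,0) + p (0,1) := by
    intro i j hij
    have hmem : ∀ x : Fin 2 × Fin 2, x = (0,0) ∨ x = (0,1) ∨ x = (1,0) ∨ x = (1,1) := by
      decide
    rcases hmem i with rfl | rfl | rfl | rfl <;> rcases hmem j with rfl | rfl | rfl | rfl <;>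
      first
        | exact absurd rfl hij
        | (refine ⟨?_, ?_⟩ <;> linarith)
  -- Lemma B: any pair sum is ≥ both p(0,0)+p(1,1) and its complement, or ≤ both,
  -- or equal to one of them
  have lemB : ∀ i j : Fin 2 × Fin 2, i ≠ j →
      (p (0,0) + p (1,1) ≤ p i + p j ∧ 1 - (p (0,0) + p (1,1)) ≤ p i + p j) ∨
      (p i + p j ≤ p (0,0) + p (1,1) ∧ p i + p j ≤ 1 - (p (0,0) + p (1,1))) ∨
      p i + p j = p (0,0) + p (1,1) ∨ p i + p j = 1 - (p (0,0) + p (1,1)) := by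
    intro i j hij
    have hmem : ∀ x : Fin 2 × Fin 2, x = (0,0) ∨ x = (0,1) ∨ x = (1,0) ∨ x = (1,1) := by
      decide
    rcases hmem i with rfl | rfl | rfl | rfl <;> rcases hmem j with rfl | rfl | rfl | rfl <;>
      first
        | exact absurd rfl hij
        | (left; refine ⟨?_, ?_⟩ <;> linarith)
        | (right; left; refine ⟨?_, ?_⟩ <;> linarith)
        | (right; right; left; ring1)
        | (right; right; right; linarith)
  -- gE of any pair sum is at most gE (p(0,0)+p(1,1))
  have key : ∀ i j : Fin 2 × Fin 2, i ≠ j →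
      gE (p i + p j) ≤ gE (p (0,0) + p (1,1)) := by
    intro i j hij
    obtain ⟨hA1, hA2⟩ := lemA i j hij
    rcases lemB i j hij with ⟨hx, hy⟩ | ⟨hx, hy⟩ | hx | hx
    · rw [← gE_symm (p i + p j)]
      exact gE_le (by linarith) (by linarith) (by linarith)
    · exact gE_le (by linarith) (by linarith) (by linarith)
    · rw [hx]
    · rw [hx, gE_symm]
  -- gE of any pair sum is at least gE (p(0,0)+p(0,1))
  have key2 : ∀ i j : Fin 2 × Fin 2, i ≠ j →
      gE (p (0,0) + p (0,1)) ≤ gE (p i + p j) := by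
    intro i j hij
    obtain ⟨hA1, hA2⟩ := lemA i j hij
    have hcd : p (1,0) + p (1,1) = 1 - (p (0,0) + p (0,1)) := by linarith
    rw [← gE_symm (p (0,0) + p (0,1)), ← hcd]
    exact gE_le (by linarith) hA1 (by linarith)
  have hσsum : p (σ (0,0)) + p (σ (0,1)) + p (σ (1,0)) + p (σ (1,1)) = 1 := by
    have h := Equiv.sum_comp σ p
    rw [hsum] at h
    rw [← sum4 (fun x => p (σ x))]
    exact h
  have hne : ∀ i j : Fin 2 × Fin 2, i ≠ j → σ i ≠ σ j := fun i j h => σ.injective.ne h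
  have hLHS : entDiff2 (p ∘ σ) =
      gE (p (σ (0,0)) + p (σ (0,1))) - gE (p (σ (0,0)) + p (σ (1,0))) := by
    simp only [entDiff2, Function.comp, gE]
    have e1 : p (σ (1,0)) + p (σ (1,1)) = 1 - (p (σ (0,0)) + p (σ (0,1))) := by linarith
    have e2 : p (σ (0,1)) + p (σ (1,1)) = 1 - (p (σ (0,0)) + p (σ (1,0))) := by linarith
    rw [e1, e2]
  have hRHS : entDiff2 (fun x =>
        if x = (0, 0) then p (0, 0) else if x = (0, 1) then p (1, 1)
        else if x = (1, 0) then p (0, 1) else p (1, 0)) =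
      gE (p (0,0) + p (1,1)) - gE (p (0,0) + p (0,1)) := by
    have h' : entDiff2 (fun x =>
          if x = (0, 0) then p (0, 0) else if x = (0, 1) then p (1, 1)
          else if x = (1, 0) then p (0, 1) else p (1, 0)) =
        (Real.negMulLog (p (0,0) + p (1,1)) + Real.negMulLog (p (0,1) + p (1,0))) -
        (Real.negMulLog (p (0,0) + p (0,1)) + Real.negMulLog (p (1,1) + p (1,0))) := by
      simp only [entDiff2]
      norm_num [Prod.ext_iff]
    rw [h']
    have e1 : p (0,1) + p (1,0) = 1 - (p (0,0) + p (1,1)) := by linarith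
    have e2 : p (1,1) + p (1,0) = 1 - (p (0,0) + p (0,1)) := by linarith
    rw [e1, e2]
    simp [gE]
  rw [hLHS, hRHS]
  have t1 := key (σ (0,0)) (σ (0,1)) (hne _ _ (by decide))
  have t2 := key2 (σ (0,0)) (σ (1,0)) (hne _ _ (by decide))
  linarith
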